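/- arXiv:1702.00244 — 3 statements merged into one kernel-verified Lean document; each statement's English description precedes it below -/
import Mathlib

section
/- Let ((S,T),(U,V)) be a twin cotorsion pair on an extriangulated category B, and B ∈ B with reflection sequence B --p_B--> B^+ ↠ S^U. The following are equivalent: (a) B ∈ U; (b) B^+ ∈ W (i.e. B^+ ≅ 0 in the quotient B̲^+); (c) p̲_B = 0 in B̲ = B/W. -/
namespace ExtriHearts

open CategoryTheory CategoryTheory.Limits Opposite

attribute [local instance] CategoryTheory.Limits.hasBinaryBiproducts_of_finite_biproducts

universe v u v₂ u₂

section IdealQuotient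

variable {D : Type u₂} [Category.{v₂} D] [Preadditive D]

/-- The subgroup of morphisms `X ⟶ Y` generated by those factoring through an object of `W`. -/
def wIdeal (W : Set D) (X Y : D) : AddSubgroup (X ⟶ Y) :=
  AddSubgroup.closure {f : X ⟶ Y | ∃ Z ∈ W, ∃ p : X ⟶ Z, ∃ q : Z ⟶ Y, f = p ≫ q}

/-- The hom relation on `D` identifying morphisms whose difference lies in the ideal
generated by morphisms factoring through an object of `W`.  (For an additively closed
subcategory `W` this is the usual relation "`f - g` factors through an object of `W`".) -/
def wRel (W : Set D) : HomRel D := fun {X Y} f g => f - g ∈ wIdeal W X Y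

lemma comp_left_mem_wIdeal (W : Set D) {X Y Z : D} (f : X ⟶ Y) {g : Y ⟶ Z}
    (hg : g ∈ wIdeal W Y Z) : f ≫ g ∈ wIdeal W X Z := by
  have hle : wIdeal W Y Z ≤ (wIdeal W X Z).comap (Preadditive.leftComp Z f) := by
    rw [wIdeal, AddSubgroup.closure_le]
    rintro g ⟨Z₀, hZ₀, p, q, rfl⟩
    exact AddSubgroup.subset_closure ⟨Z₀, hZ₀, f ≫ p, q, by
      simp [Preadditive.leftComp]⟩
  simpa [Preadditive.leftComp] using hle hg

lemma comp_right_mem_wIdeal (W : Set D) {X Y Z : D} {f : X ⟶ Y} (g : Y ⟶ Z)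
    (hf : f ∈ wIdeal W X Y) : f ≫ g ∈ wIdeal W X Z := by
  have hle : wIdeal W X Y ≤ (wIdeal W X Z).comap (Preadditive.rightComp X g) := by
    rw [wIdeal, AddSubgroup.closure_le]
    rintro f ⟨Z₀, hZ₀, p, q, rfl⟩
    exact AddSubgroup.subset_closure ⟨Z₀, hZ₀, p, q ≫ g, by
      simp [Preadditive.rightComp]⟩
  simpa [Preadditive.rightComp] using hle hf

instance wRel_congruence (W : Set D) : Congruence (wRel W) where
  equivalence :=
    { refl := fun f => by
        show f - f ∈ wIdeal W _ _
        simp only [sub_self]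
        exact zero_mem _
      symm := fun {f g} h => by
        have h' : f - g ∈ wIdeal W _ _ := h
        show g - f ∈ wIdeal W _ _
        simpa only [neg_sub] using neg_mem h'
      trans := fun {f g h} h₁ h₂ => by
        have h₁' : f - g ∈ wIdeal W _ _ := h₁
        have h₂' : g - h ∈ wIdeal W _ _ := h₂
        show f - h ∈ wIdeal W _ _
        simpa only [sub_add_sub_cancel] using add_mem h₁' h₂' }
  comp_left := fun {X Y Z} f {g g'} h => by
    have h' : g - g' ∈ wIdeal W _ _ := h
    show f ≫ g - f ≫ g' ∈ wIdeal W _ _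
    simpa only [← Preadditive.comp_sub] using comp_left_mem_wIdeal W f h'
  comp_right := fun {X Y Z} {f f'} g h => by
    have h' : f - f' ∈ wIdeal W _ _ := h
    show f ≫ g - f' ≫ g ∈ wIdeal W _ _
    simpa only [← Preadditive.sub_comp] using comp_right_mem_wIdeal W g h'

/-- The quotient of a preadditive category by (the ideal generated by) the morphisms factoring
through a class of objects `W`. -/
abbrev QuotCat (W : Set D) := CategoryTheory.Quotient (wRel W)

/-- The canonical quotient functor. -/
abbrev toQuot (W : Set D) : D ⥤ QuotCat W := Quotient.functor _

instance quotCatPreadditive (W : Set D) : Preadditive (QuotCat W) :=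
  Quotient.preadditive _ (fun X Y f₁ f₂ g₁ g₂ h₁ h₂ => by
    have h₁' : f₁ - f₂ ∈ wIdeal W X Y := h₁
    have h₂' : g₁ - g₂ ∈ wIdeal W X Y := h₂
    show f₁ + g₁ - (f₂ + g₂) ∈ wIdeal W X Y
    have heq : f₁ + g₁ - (f₂ + g₂) = f₁ - f₂ + (g₁ - g₂) := by abel
    rw [heq]
    exact add_mem h₁' h₂')

end IdealQuotient

section ExtCat

/-- The data of an additive `Ab`-valued bifunctor together with a realization predicate:
`realize δ x y` means that the 3-term sequence `A --x--> X --y--> C` realizes the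
`E`-extension `δ ∈ E(C,A)`, i.e. belongs to the equivalence class `s(δ)`. -/
structure PreExtStruct (B : Type u) [Category.{v} B] [Preadditive B] where
  /-- The additive bifunctor `E : Bᵒᵖ × B → Ab`. -/
  E : Bᵒᵖ ⥤ B ⥤ AddCommGrpCat.{v}

namespace PreExtStruct

variable {B : Type u} [Category.{v} B] [Preadditive B]

/-- The abelian group `E(C,A)` of `E`-extensions of `C` by `A`. -/
abbrev Ext (σ : PreExtStruct B) (C A : B) : AddCommGrpCat.{v} := (σ.E.obj (op C)).obj A

/-- `a_* δ`, the pushforward of an `E`-extension along `a : A ⟶ A'`. -/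
def push (σ : PreExtStruct B) {C A A' : B} (a : A ⟶ A') (δ : σ.Ext C A) : σ.Ext C A' :=
  (σ.E.obj (op C)).map a δ

/-- `c^* δ`, the pullback of an `E`-extension along `c : C' ⟶ C`. -/
def pull (σ : PreExtStruct B) {C' C A : B} (c : C' ⟶ C) (δ : σ.Ext C A) : σ.Ext C' A :=
  (σ.E.map c.op).app A δ

/-- The direct sum `δ ⊕ δ'` of two `E`-extensions, i.e. the element of
`E(C ⊞ C', A ⊞ A')` corresponding to `(δ, 0, 0, δ')`. -/
noncomputable def sumExt (σ : PreExtStruct B) [HasBinaryBiproducts B] {C C' A A' : B}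
    (δ : σ.Ext C A) (δ' : σ.Ext C' A') : σ.Ext (C ⊞ C') (A ⊞ A') :=
  σ.push biprod.inl (σ.pull biprod.fst δ) + σ.push biprod.inr (σ.pull biprod.snd δ')

end PreExtStruct

/-- An *extriangulated category* structure `(E, s)` on an additive category `B`, consisting of
an additive bifunctor `E : Bᵒᵖ × B → Ab` and an additive realization `s` of `E` (encoded by the
predicate `realize`), subject to the axioms (ET1), (ET2), (ET3), (ET3)ᵒᵖ, (ET4), (ET4)ᵒᵖ of
Nakaoka–Palu. -/
structure ExtStruct (B : Type u) [Category.{v} B] [Preadditive B] [HasFiniteBiproducts B]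
    extends PreExtStruct B where
  /-- (ET1) `E` is additive in the second variable. -/
  additive_fst : ∀ Cop : Bᵒᵖ, (E.obj Cop).Additive
  /-- (ET1) `E` is additive in the first variable. -/
  additive_snd : ∀ A : B, (E.flip.obj A).Additive
  /-- `realize δ x y` means the sequence `A --x--> X --y--> C` realizes `δ`, i.e. it belongs to
  the equivalence class `s(δ)`. -/
  realize : ∀ ⦃A C : B⦄, toPreExtStruct.Ext C A → ∀ ⦃X : B⦄, (A ⟶ X) → (X ⟶ C) → Prop
  /-- Every `E`-extension is realized by some sequence. -/
  realize_ex : ∀ ⦃A C : B⦄ (δ : toPreExtStruct.Ext C A),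
      ∃ (X : B) (x : A ⟶ X) (y : X ⟶ C), realize δ x y
  /-- `s(δ)` is closed under the equivalence of sequences. -/
  realize_iso : ∀ ⦃A C X X' : B⦄ (δ : toPreExtStruct.Ext C A) (x : A ⟶ X) (y : X ⟶ C)
      (b : X ≅ X'), realize δ x y → realize δ (x ≫ b.hom) (b.inv ≫ y)
  /-- Any two realizations of `δ` are equivalent sequences. -/
  realize_unique : ∀ ⦃A C X X' : B⦄ (δ : toPreExtStruct.Ext C A) (x : A ⟶ X) (y : X ⟶ C)
      (x' : A ⟶ X') (y' : X' ⟶ C), realize δ x y → realize δ x' y' →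
      ∃ b : X ≅ X', x ≫ b.hom = x' ∧ b.hom ≫ y' = y
  /-- (ET2)(∗) Any morphism of `E`-extensions is realized by a morphism of sequences. -/
  realize_map : ∀ ⦃A C A' C' X X' : B⦄ (δ : toPreExtStruct.Ext C A) (δ' : toPreExtStruct.Ext C' A')
      (x : A ⟶ X) (y : X ⟶ C) (x' : A' ⟶ X') (y' : X' ⟶ C') (a : A ⟶ A') (c : C ⟶ C'),
      realize δ x y → realize δ' x' y' →
      toPreExtStruct.push a δ = toPreExtStruct.pull c δ' →
      ∃ b : X ⟶ X', x ≫ b = a ≫ x' ∧ y ≫ c = b ≫ y'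
  /-- (ET2)(i) The split extension is realized by the split sequence. -/
  realize_zero : ∀ A C : B,
      realize (0 : toPreExtStruct.Ext C A) (biprod.inl : A ⟶ A ⊞ C) (biprod.snd : A ⊞ C ⟶ C)
  /-- (ET2)(ii) Realization is additive. -/
  realize_sum : ∀ ⦃A C A' C' X X' : B⦄ (δ : toPreExtStruct.Ext C A)
      (δ' : toPreExtStruct.Ext C' A') (x : A ⟶ X) (y : X ⟶ C) (x' : A' ⟶ X') (y' : X' ⟶ C'),
      realize δ x y → realize δ' x' y' →
      realize (toPreExtStruct.sumExt δ δ') (biprod.map x x') (biprod.map y y')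
  /-- (ET3) -/
  et3 : ∀ ⦃A C A' C' X X' : B⦄ (δ : toPreExtStruct.Ext C A) (δ' : toPreExtStruct.Ext C' A')
      (x : A ⟶ X) (y : X ⟶ C) (x' : A' ⟶ X') (y' : X' ⟶ C'),
      realize δ x y → realize δ' x' y' → ∀ (a : A ⟶ A') (b : X ⟶ X'), x ≫ b = a ≫ x' →
      ∃ c : C ⟶ C', toPreExtStruct.push a δ = toPreExtStruct.pull c δ' ∧ y ≫ c = b ≫ y'
  /-- (ET3)ᵒᵖ -/
  et3op : ∀ ⦃A C A' C' X X' : B⦄ (δ : toPreExtStruct.Ext C A) (δ' : toPreExtStruct.Ext C' A')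
      (x : A ⟶ X) (y : X ⟶ C) (x' : A' ⟶ X') (y' : X' ⟶ C'),
      realize δ x y → realize δ' x' y' → ∀ (b : X ⟶ X') (c : C ⟶ C'), y ≫ c = b ≫ y' →
      ∃ a : A ⟶ A', toPreExtStruct.push a δ = toPreExtStruct.pull c δ' ∧ x ≫ b = a ≫ x'
  /-- (ET4) -/
  et4 : ∀ ⦃A B₀ D C F : B⦄ (δ : toPreExtStruct.Ext D A) (f : A ⟶ B₀) (f' : B₀ ⟶ D)
      (δ' : toPreExtStruct.Ext F B₀) (g : B₀ ⟶ C) (g' : C ⟶ F),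
      realize δ f f' → realize δ' g g' →
      ∃ (E₀ : B) (d : D ⟶ E₀) (e : E₀ ⟶ F) (h' : C ⟶ E₀) (δ'' : toPreExtStruct.Ext E₀ A),
        g ≫ h' = f' ≫ d ∧ h' ≫ e = g' ∧
        realize δ'' (f ≫ g) h' ∧ realize (toPreExtStruct.push f' δ') d e ∧
        toPreExtStruct.pull d δ'' = δ ∧ toPreExtStruct.push f δ'' = toPreExtStruct.pull e δ'
  /-- (ET4)ᵒᵖ -/
  et4op : ∀ ⦃F C B₀ D A : B⦄ (δ' : toPreExtStruct.Ext B₀ F) (s : F ⟶ C) (t : C ⟶ B₀)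
      (δ : toPreExtStruct.Ext A D) (u : D ⟶ B₀) (v : B₀ ⟶ A),
      realize δ' s t → realize δ u v →
      ∃ (E₀ : B) (e : F ⟶ E₀) (d : E₀ ⟶ D) (m : E₀ ⟶ C) (δ'' : toPreExtStruct.Ext A E₀),
        m ≫ t = d ≫ u ∧ e ≫ m = s ∧
        realize δ'' m (t ≫ v) ∧ realize (toPreExtStruct.pull u δ') e d ∧
        toPreExtStruct.push d δ'' = δ ∧
        toPreExtStruct.pull v δ'' = toPreExtStruct.push e δ'

namespace ExtStruct

variable {B : Type u} [Category.{v} B] [Preadditive B] [HasFiniteBiproducts B] (σ : ExtStruct B)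

/-- A sequence `A --x--> X --y--> C` is a conflation if it realizes some `E`-extension. -/
def Conflation {A X C : B} (x : A ⟶ X) (y : X ⟶ C) : Prop :=
  ∃ δ : σ.Ext C A, σ.realize δ x y

/-- `Cone(D₁, D₂)`: objects `X` admitting a conflation `D₁ ↣ D₂ ↠ X`. -/
def Cone (D₁ D₂ : Set B) : Set B :=
  {X | ∃ (A Y : B) (f : A ⟶ Y) (g : Y ⟶ X), A ∈ D₁ ∧ Y ∈ D₂ ∧ σ.Conflation f g}

/-- `CoCone(D₁, D₂)`: objects `X` admitting a conflation `X ↣ D₁ ↠ D₂`. -/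
def CoCone (D₁ D₂ : Set B) : Set B :=
  {X | ∃ (Y C : B) (f : X ⟶ Y) (g : Y ⟶ C), Y ∈ D₁ ∧ C ∈ D₂ ∧ σ.Conflation f g}

/-- `D₁ ∗ D₂`: objects `X` admitting a conflation `D₁ ↣ X ↠ D₂`. -/
def star (D₁ D₂ : Set B) : Set B :=
  {X | ∃ (A C : B) (f : A ⟶ X) (g : X ⟶ C), A ∈ D₁ ∧ C ∈ D₂ ∧ σ.Conflation f g}

/-- `add(D₁ ∗ D₂)`: direct summands of objects of `D₁ ∗ D₂`. -/
def addStar (D₁ D₂ : Set B) : Set B :=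
  {X | ∃ Y ∈ σ.star D₁ D₂, ∃ (s : X ⟶ Y) (r : Y ⟶ X), s ≫ r = 𝟙 X}

/-- An object `P` is projective if `E(P, −) = 0`. -/
def IsProj (P : B) : Prop := ∀ (A : B) (δ : σ.Ext P A), δ = 0

/-- An object `I` is injective if `E(−, I) = 0`. -/
def IsInj (I : B) : Prop := ∀ (C : B) (δ : σ.Ext C I), δ = 0

/-- The class of projective objects. -/
def projs : Set B := {P | σ.IsProj P}

/-- `B` has enough projectives: every object admits a deflation from a projective. -/
def EnoughProj : Prop :=
  ∀ X : B, ∃ (P K : B) (i : K ⟶ P) (p : P ⟶ X), σ.IsProj P ∧ σ.Conflation i p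

/-- `B` has enough injectives: every object admits an inflation into an injective. -/
def EnoughInj : Prop :=
  ∀ X : B, ∃ (I C : B) (i : X ⟶ I) (p : I ⟶ C), σ.IsInj I ∧ σ.Conflation i p

end ExtStruct

/-- A full additive subcategory (given as a class of objects), closed under isomorphisms and
direct summands. -/
structure AddClosed {B : Type u} [Category.{v} B] [Preadditive B] [HasFiniteBiproducts B]
    (U : Set B) : Prop where
  zero_mem : ∀ Z : B, IsZero Z → Z ∈ U
  biprod_mem : ∀ X Y : B, X ∈ U → Y ∈ U → (X ⊞ Y) ∈ U
  summand_mem : ∀ X Y : B, Y ∈ U → ∀ (s : X ⟶ Y) (r : Y ⟶ X), s ≫ r = 𝟙 X → X ∈ U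

namespace ExtStruct

variable {B : Type u} [Category.{v} B] [Preadditive B] [HasFiniteBiproducts B] (σ : ExtStruct B)

/-- A (complete) cotorsion pair `(U, V)` on an extriangulated category. -/
structure IsCotorsionPair (U V : Set B) : Prop where
  addU : AddClosed U
  addV : AddClosed V
  ext_vanish : ∀ ⦃X : B⦄, X ∈ U → ∀ ⦃Y : B⦄, Y ∈ V → ∀ δ : σ.Ext X Y, δ = 0
  resolve : ∀ X : B, ∃ (V₀ U₀ : B) (f : V₀ ⟶ U₀) (g : U₀ ⟶ X),
      V₀ ∈ V ∧ U₀ ∈ U ∧ σ.Conflation f g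
  coresolve : ∀ X : B, ∃ (V₀ U₀ : B) (f : X ⟶ V₀) (g : V₀ ⟶ U₀),
      V₀ ∈ V ∧ U₀ ∈ U ∧ σ.Conflation f g

/-- A twin cotorsion pair `((S,T), (U,V))`. -/
structure IsTwinCotorsionPair (S T U V : Set B) : Prop where
  fst : σ.IsCotorsionPair S T
  snd : σ.IsCotorsionPair U V
  ext_SV : ∀ ⦃X : B⦄, X ∈ S → ∀ ⦃Y : B⦄, Y ∈ V → ∀ δ : σ.Ext X Y, δ = 0

section Twin

variable (S T U V : Set B)

/-- `B⁺ = Cone(V, W)` for the core `W = T ∩ U` of a twin cotorsion pair. -/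
def tPos : Set B := σ.Cone V (T ∩ U)

/-- `B⁻ = CoCone(W, S)` for the core `W = T ∩ U` of a twin cotorsion pair. -/
def tNeg : Set B := σ.CoCone (T ∩ U) S

/-- The class of objects of the heart `H = B⁺ ∩ B⁻` of a twin cotorsion pair. -/
def tHeartSet : Set B := σ.tPos T U V ∩ σ.tNeg S T U

/-- The heart `H/W` of a twin cotorsion pair, as a full subcategory of the quotient
category `B/W`. -/
abbrev THeart := ObjectProperty.FullSubcategory (fun X : QuotCat (T ∩ U : Set B) => X.as ∈ σ.tHeartSet S T U V)


/-- A *reflection sequence* for `B₀`: a conflation `B₀ ↣ Z ↠ S₀` with `Z ∈ B⁺`, `S₀ ∈ S`,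
such that `z^* : E(Z, V₀) → E(B₀, V₀)` is surjective for every `V₀ ∈ V`. -/
def IsReflectionSeq {B₀ Z S₀ : B} (z : B₀ ⟶ Z) (w : Z ⟶ S₀) : Prop :=
  Z ∈ σ.tPos T U V ∧ S₀ ∈ S ∧ σ.Conflation z w ∧
    ∀ ⦃V₀ : B⦄, V₀ ∈ V → Function.Surjective (fun δ : σ.Ext Z V₀ => σ.pull z δ)

/-- A *coreflection sequence* for `B₀`: a conflation `V₀ ↣ X ↠ B₀` with `X ∈ B⁻`, `V₀ ∈ V`,
such that `x_* : E(S₀, X) → E(S₀, B₀)` is surjective for every `S₀ ∈ S`. -/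
def IsCoreflectionSeq {V₀ X B₀ : B} (v : V₀ ⟶ X) (x : X ⟶ B₀) : Prop :=
  X ∈ σ.tNeg S T U ∧ V₀ ∈ V ∧ σ.Conflation v x ∧
    ∀ ⦃S₀ : B⦄, S₀ ∈ S → Function.Surjective (fun δ : σ.Ext S₀ X => σ.push x δ)

end Twin

section Single

variable (U V : Set B)

/-- `B⁺` for a single cotorsion pair `(U,V)`, with core `W = U ∩ V`. -/
def sPos : Set B := σ.Cone V (U ∩ V)

/-- `B⁻` for a single cotorsion pair `(U,V)`, with core `W = U ∩ V`. -/
def sNeg : Set B := σ.CoCone (U ∩ V) U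

/-- The class of objects of the heart of a single cotorsion pair. -/
def sHeartSet : Set B := σ.sPos U V ∩ σ.sNeg U V

/-- The heart `H/W` of a cotorsion pair `(U,V)`, a full subcategory of `B/W`, `W = U ∩ V`. -/
abbrev SHeart := ObjectProperty.FullSubcategory (fun X : QuotCat (U ∩ V : Set B) => X.as ∈ σ.sHeartSet U V)

/-- The inclusion of the heart into the quotient category `B/W`. -/
abbrev sHeartIncl : σ.SHeart U V ⥤ QuotCat (U ∩ V : Set B) := ObjectProperty.ι _

/-- The kernel `K = add(U ∗ V)` of a cotorsion pair. -/
def kernelSet : Set B := σ.addStar U V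

/-- The coheart `C = ⊥₁K` of a cotorsion pair. -/
def coheart : Set B := {X | ∀ ⦃K : B⦄, K ∈ σ.kernelSet U V → ∀ δ : σ.Ext X K, δ = 0}


/-- An object of the heart determined by an object of `B` lying in `B⁺ ∩ B⁻`. -/
def sHeartObj {X : B} (hX : X ∈ σ.sHeartSet U V) : σ.SHeart U V :=
  ⟨(toQuot (U ∩ V : Set B)).obj X, hX⟩

/-- The image in the heart of a morphism of `B` between objects of `B⁺ ∩ B⁻`. -/
def sHeartHom {X Y : B} (hX : X ∈ σ.sHeartSet U V) (hY : Y ∈ σ.sHeartSet U V) (f : X ⟶ Y) :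
    σ.sHeartObj U V hX ⟶ σ.sHeartObj U V hY :=
  ObjectProperty.homMk ((toQuot (U ∩ V : Set B)).map f)

end Single

end ExtStruct

end ExtCat

section More

variable {B : Type u} [Category.{v} B] [Preadditive B] [HasFiniteBiproducts B]

namespace ExtStruct

variable (σ : ExtStruct B)

/-- `Ω D₀ = CoCone(P, D₀)`, the syzygy class of a class of objects `D₀`. -/
def omegaSet (D₀ : Set B) : Set B := σ.CoCone σ.projs D₀

/-- A choice of iterated syzygies of `X`: `Z 0 = X` and for each `i` there is a conflation
`Z (i+1) ↣ P ↠ Z i` with `P` projective. -/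
def SyzygyChain (X : B) (Z : ℕ → B) : Prop :=
  Z 0 = X ∧ ∀ i : ℕ, ∃ (P : B) (f : Z (i + 1) ⟶ P) (g : P ⟶ Z i),
    σ.IsProj P ∧ σ.Conflation f g

/-- A choice of iterated cosyzygies of `Y`: `Z 0 = Y` and for each `i` there is a conflation
`Z i ↣ I ↠ Z (i+1)` with `I` injective. -/
def CosyzygyChain (Y : B) (Z : ℕ → B) : Prop :=
  Z 0 = Y ∧ ∀ i : ℕ, ∃ (I : B) (f : Z i ⟶ I) (g : I ⟶ Z (i + 1)),
    σ.IsInj I ∧ σ.Conflation f g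

/-- Vanishing of the higher extension group `E^{i+1}(X, Y) = E(X, Σ^i Y)`, expressed via
cosyzygy chains.  (`hExtVanish σ X Y 0` is the vanishing of `E(X,Y)` itself.) -/
def hExtVanish (X Y : B) (i : ℕ) : Prop :=
  ∀ Z : ℕ → B, σ.CosyzygyChain Y Z → ∀ δ : σ.Ext X (Z i), δ = 0

/-- `Σ^j D₀`: the class of `j`-th cosyzygies of objects of `D₀`. -/
def sigmaSet (j : ℕ) (D₀ : Set B) : Set B :=
  {X | ∃ Y ∈ D₀, ∃ Z : ℕ → B, σ.CosyzygyChain Y Z ∧ Z j = X}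

/-- An `n`-cluster tilting subcategory of an extriangulated category:
it is functorially finite, and `X ∈ M` iff `E^i(X, M) = 0` for `1 ≤ i ≤ n - 1`,
iff `E^i(M, X) = 0` for `1 ≤ i ≤ n - 1`. -/
structure IsNClusterTilting (n : ℕ) (M : Set B) : Prop where
  contravariantly_finite : ∀ X : B, ∃ M₀ ∈ M, ∃ f : M₀ ⟶ X,
      ∀ M₁ ∈ M, ∀ g : M₁ ⟶ X, ∃ h : M₁ ⟶ M₀, h ≫ f = g
  covariantly_finite : ∀ X : B, ∃ M₀ ∈ M, ∃ f : X ⟶ M₀,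
      ∀ M₁ ∈ M, ∀ g : X ⟶ M₁, ∃ h : M₀ ⟶ M₁, f ≫ h = g
  mem_iff_vanish_left : ∀ X : B,
      X ∈ M ↔ ∀ i : ℕ, i ≤ n - 2 → ∀ Y ∈ M, σ.hExtVanish X Y i
  mem_iff_vanish_right : ∀ X : B,
      X ∈ M ↔ ∀ i : ℕ, i ≤ n - 2 → ∀ Y ∈ M, σ.hExtVanish Y X i

/-- `mlev σ M k` is the subcategory `M_{k+1}` of the paper: `M_1 = M` and
`M_{ℓ} = Cone(M_{ℓ-1}, M)`. -/
def mlev (M : Set B) : ℕ → Set B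
  | 0 => M
  | (k + 1) => σ.Cone (mlev M k) M

end ExtStruct

section Reflectors

variable (W P N : Set B)

/-- The data of a reflection functor `σ⁺` onto the objects of `B⁺` (given by the class `P`),
i.e. a left adjoint of the inclusion of the full subcategory of `B/W` on `P` in the bijection
formulation: composing with the unit `B → σ⁺B` gives bijections
`(σ⁺X ⟶ Y) ≃ (X ⟶ Y)` for all `Y` lying in `P`. -/
structure ReflectorData where
  σp : QuotCat W ⥤ QuotCat W
  mem : ∀ X : QuotCat W, (σp.obj X).as ∈ P
  unit : 𝟭 (QuotCat W) ⟶ σp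
  bij : ∀ (X Y : QuotCat W), Y.as ∈ P →
      Function.Bijective (fun g : (σp.obj X ⟶ Y) => unit.app X ≫ g)

/-- The data of a coreflection functor `σ⁻` onto the objects of `B⁻` (given by the class `N`). -/
structure CoreflectorData where
  σm : QuotCat W ⥤ QuotCat W
  mem : ∀ X : QuotCat W, (σm.obj X).as ∈ N
  counit : σm ⟶ 𝟭 (QuotCat W)
  bij : ∀ (X Y : QuotCat W), X.as ∈ N →
      Function.Bijective (fun g : (X ⟶ σm.obj Y) => g ≫ counit.app Y)

end Reflectors

namespace ExtStruct

variable (σ : ExtStruct B)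

/-- The data of the cohomological functor `H = σ⁻ ∘ σ⁺ ∘ π : B → H` associated to a cotorsion
pair `(U, V)`: reflection and coreflection functors together with a functor `H` to the heart
which is isomorphic to `σ⁻ ∘ σ⁺ ∘ π` after composition with the inclusion of the heart. -/
structure HeartFunctorData (U V : Set B) where
  refl : ReflectorData (B := B) (U ∩ V) (σ.sPos U V)
  corefl : CoreflectorData (B := B) (U ∩ V) (σ.sNeg U V)
  H : B ⥤ σ.SHeart U V
  iso : (H ⋙ σ.sHeartIncl U V) ≅ (toQuot (U ∩ V : Set B) ⋙ refl.σp ⋙ corefl.σm)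

end ExtStruct

section Mod

variable (D : Type u₂) [Category.{v₂} D] [Preadditive D]

/-- A coherent (finitely presented) functor `Dᵒᵖ ⥤ Ab`: one admitting an exact presentation
`Hom(−,X) → Hom(−,Y) → F → 0`. -/
def IsCoherent (F : Dᵒᵖ ⥤ AddCommGrpCat.{v₂}) : Prop :=
  ∃ (X Y : D) (f : X ⟶ Y) (η : preadditiveYoneda.obj Y ⟶ F),
    (∀ A : D, Function.Surjective (η.app (op A))) ∧
    (∀ (A : D) (g : A ⟶ Y), η.app (op A) g = 0 ↔ ∃ h : A ⟶ X, h ≫ f = g)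

/-- `mod D`: the category of coherent functors `Dᵒᵖ ⥤ Ab`. -/
abbrev ModCat := ObjectProperty.FullSubcategory (fun F : Dᵒᵖ ⥤ AddCommGrpCat.{v₂} => IsCoherent D F)

end Mod

/-- The additive quotient `C/P` of the full subcategory of `B` on a class `C₀` of objects by
(the ideal of) morphisms factoring through objects satisfying `P₀`. -/
abbrev StableCat (C₀ P₀ : Set B) :=
  QuotCat (D := ObjectProperty.FullSubcategory (fun X : B => X ∈ C₀)) {Z | Z.obj ∈ P₀}

end More

/-! Since `E(S, V) = 0`, the completeness of `(U, V)` gives `S ⊆ U`, and `U = ⊥V` is closed under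
extensions; so `B ∈ U` forces `B⁺ ∈ U`. The conflation `V' ↣ W' ↠ B⁺` exhibiting `B⁺ ∈ Cone(V, W)`
then splits, whence `B⁺ ∈ W`, and `p_B` factors through `B⁺ ∈ W`. Conversely, if `p_B` factors
through an object of `W ⊆ U`, then `p_B^* : E(B⁺, V) → E(B, V)` is both surjective and zero, so
`E(B, V) = 0` and `B ∈ U`. -/

namespace PreExtStruct

variable {B : Type u} [Category.{v} B] [Preadditive B] (σ : PreExtStruct B)

lemma pull_zero {C' C A : B} (c : C' ⟶ C) : σ.pull c (0 : σ.Ext C A) = 0 :=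
  map_zero _

lemma push_id {C A : B} (δ : σ.Ext C A) : σ.push (𝟙 A) δ = δ := by
  simp [push]

lemma push_comp {C A A' A'' : B} (a : A ⟶ A') (b : A' ⟶ A'') (δ : σ.Ext C A) :
    σ.push (a ≫ b) δ = σ.push b (σ.push a δ) := by
  simp [push]

lemma pull_comp {C'' C' C A : B} (a : C'' ⟶ C') (b : C' ⟶ C) (δ : σ.Ext C A) :
    σ.pull (a ≫ b) δ = σ.pull a (σ.pull b δ) := by
  simp only [pull, op_comp, Functor.map_comp]
  rfl

lemma pull_push {C' C A A' : B} (c : C' ⟶ C) (a : A ⟶ A') (δ : σ.Ext C A) :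
    σ.pull c (σ.push a δ) = σ.push a (σ.pull c δ) :=
  ConcreteCategory.congr_hom ((σ.E.map c.op).naturality a) δ

end PreExtStruct

section Quotient

variable {B : Type u} [Category.{v} B] [Preadditive B] [HasFiniteBiproducts B]

lemma AddClosed.inter {T U : Set B} (hT : AddClosed T) (hU : AddClosed U) :
    AddClosed (T ∩ U) where
  zero_mem Z hZ := ⟨hT.zero_mem Z hZ, hU.zero_mem Z hZ⟩
  biprod_mem X Y hX hY := ⟨hT.biprod_mem X Y hX.1 hY.1, hU.biprod_mem X Y hX.2 hY.2⟩
  summand_mem X Y hY s r hsr :=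
    ⟨hT.summand_mem X Y hY.1 s r hsr, hU.summand_mem X Y hY.2 s r hsr⟩

lemma mem_wIdeal_iff {W : Set B} (hW : AddClosed W) {X Y : B} (f : X ⟶ Y) :
    f ∈ wIdeal W X Y ↔ ∃ Z ∈ W, ∃ p : X ⟶ Z, ∃ q : Z ⟶ Y, f = p ≫ q := by
  refine ⟨fun hf => ?_, fun hf => AddSubgroup.subset_closure hf⟩
  induction hf using AddSubgroup.closure_induction with
  | mem g hg => exact hg
  | zero =>
    obtain ⟨Z, hZ⟩ := (inferInstance : HasZeroObject B).zero
    exact ⟨Z, hW.zero_mem Z hZ, 0, 0, by simp⟩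
  | add g₁ g₂ _ _ ih₁ ih₂ =>
    obtain ⟨Z₁, hZ₁, p₁, q₁, rfl⟩ := ih₁
    obtain ⟨Z₂, hZ₂, p₂, q₂, rfl⟩ := ih₂
    exact ⟨Z₁ ⊞ Z₂, hW.biprod_mem Z₁ Z₂ hZ₁ hZ₂, biprod.lift p₁ p₂, biprod.desc q₁ q₂,
      biprod.lift_desc.symm⟩
  | neg g _ ih =>
    obtain ⟨Z, hZ, p, q, rfl⟩ := ih
    exact ⟨Z, hZ, p, -q, by simp⟩

lemma toQuot_map_eq_zero_iff {W : Set B} (hW : AddClosed W) {X Y : B} (f : X ⟶ Y) :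
    (toQuot W).map f = 0 ↔ ∃ Z ∈ W, ∃ p : X ⟶ Z, ∃ q : Z ⟶ Y, f = p ≫ q := by
  rw [← (toQuot W).map_zero X Y, Quotient.functor_map_eq_iff]
  show f - 0 ∈ wIdeal W X Y ↔ _
  rw [sub_zero, mem_wIdeal_iff hW]

end Quotient

namespace ExtStruct

variable {B : Type u} [Category.{v} B] [Preadditive B] [HasFiniteBiproducts B] (σ : ExtStruct B)

lemma exists_section_of_realize_zero {A C X : B} {x : A ⟶ X} {y : X ⟶ C}
    (h : σ.realize (0 : σ.Ext C A) x y) : ∃ s : C ⟶ X, s ≫ y = 𝟙 C := by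
  obtain ⟨b, _, hb⟩ := σ.realize_unique 0 biprod.inl biprod.snd x y (σ.realize_zero A C) h
  exact ⟨biprod.inr ≫ b.hom, by rw [Category.assoc, hb, biprod.inr_snd]⟩

lemma exists_retraction_of_realize_zero {A C X : B} {x : A ⟶ X} {y : X ⟶ C}
    (h : σ.realize (0 : σ.Ext C A) x y) : ∃ r : X ⟶ A, x ≫ r = 𝟙 A := by
  obtain ⟨b, hb, _⟩ := σ.realize_unique 0 biprod.inl biprod.snd x y (σ.realize_zero A C) h
  exact ⟨b.inv ≫ biprod.fst, by rw [← hb]; simp⟩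

lemma mem_of_realize_zero {W : Set B} (hW : AddClosed W) {A C X : B} {x : A ⟶ X} {y : X ⟶ C}
    (h : σ.realize (0 : σ.Ext C A) x y) (hX : X ∈ W) : C ∈ W := by
  obtain ⟨s, hs⟩ := σ.exists_section_of_realize_zero h
  exact hW.summand_mem C X hX s y hs

/-- (ET4)ᵒᵖ glues a realization of `θ` to `A ↣ X ↠ C`; the resulting conflation realizing
`x^* θ = 0` splits, and its retraction pushes the new extension of `C` onto `θ`. -/
lemma Conflation.exists_eq_pull_of_pull_eq_zero {σ : ExtStruct B} {A X C A₀ : B}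
    {x : A ⟶ X} {y : X ⟶ C} (hc : σ.Conflation x y) (θ : σ.Ext X A₀)
    (hθ : σ.pull x θ = 0) : ∃ ε : σ.Ext C A₀, θ = σ.pull y ε := by
  obtain ⟨δ, hδ⟩ := hc
  obtain ⟨M, m, e, hθreal⟩ := σ.realize_ex θ
  obtain ⟨_, _, _, _, δ'', _, _, _, hsplit, _, hpull⟩ := σ.et4op θ m e δ x y hθreal hδ
  rw [hθ] at hsplit
  obtain ⟨r, hr⟩ := σ.exists_retraction_of_realize_zero hsplit
  refine ⟨σ.push r δ'', ?_⟩
  rw [σ.pull_push, hpull, ← σ.push_comp, hr, σ.push_id]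

namespace IsCotorsionPair

variable {σ} {U V : Set B}

lemma mem_left_of_ext_eq_zero (cp : σ.IsCotorsionPair U V) {X : B}
    (h : ∀ V₀ ∈ V, ∀ δ : σ.Ext X V₀, δ = 0) : X ∈ U := by
  obtain ⟨V₀, U₀, _, _, hV₀, hU₀, δ, hδ⟩ := cp.resolve X
  rw [h V₀ hV₀ δ] at hδ
  exact σ.mem_of_realize_zero cp.addU hδ hU₀

lemma mem_left_of_conflation (cp : σ.IsCotorsionPair U V) {A X C : B} {x : A ⟶ X}
    {y : X ⟶ C} (hc : σ.Conflation x y) (hA : A ∈ U) (hC : C ∈ U) : X ∈ U := by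
  refine cp.mem_left_of_ext_eq_zero fun V₀ hV₀ θ => ?_
  obtain ⟨ε, rfl⟩ := hc.exists_eq_pull_of_pull_eq_zero θ (cp.ext_vanish hA hV₀ _)
  rw [cp.ext_vanish hC hV₀ ε, σ.pull_zero]

lemma mem_left_of_surjective_pull_comp (cp : σ.IsCotorsionPair U V) {X Y Z : B} (hZ : Z ∈ U)
    (f : X ⟶ Z) (g : Z ⟶ Y)
    (hsurj : ∀ ⦃V₀ : B⦄, V₀ ∈ V → Function.Surjective (fun δ : σ.Ext Y V₀ => σ.pull (f ≫ g) δ)) :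
    X ∈ U := by
  refine cp.mem_left_of_ext_eq_zero fun V₀ hV₀ δ => ?_
  obtain ⟨δ', rfl⟩ := hsurj hV₀ δ
  show σ.pull (f ≫ g) δ' = 0
  rw [σ.pull_comp, cp.ext_vanish hZ hV₀ (σ.pull g δ'), σ.pull_zero]

lemma mem_of_mem_cone (cp : σ.IsCotorsionPair U V) {W : Set B} (hW : AddClosed W) {X : B}
    (hX : X ∈ σ.Cone V W) (hXU : X ∈ U) : X ∈ W := by
  obtain ⟨V₁, W₁, _, _, hV₁, hW₁, δ, hδ⟩ := hX
  rw [cp.ext_vanish hXU hV₁ δ] at hδ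
  exact σ.mem_of_realize_zero hW hδ hW₁

end IsCotorsionPair

namespace IsReflectionSeq

variable {σ} {S T U V : Set B} {B₀ Z S₀ : B} {z : B₀ ⟶ Z} {w : Z ⟶ S₀}

lemma mem_core (twin : σ.IsTwinCotorsionPair S T U V) (h : σ.IsReflectionSeq S T U V z w)
    (hB₀ : B₀ ∈ U) : Z ∈ T ∩ U := by
  obtain ⟨hZ, hS₀, hconf, -⟩ := h
  have hS₀U : S₀ ∈ U := twin.snd.mem_left_of_ext_eq_zero (twin.ext_SV hS₀)
  exact twin.snd.mem_of_mem_cone (twin.fst.addV.inter twin.snd.addU) hZ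
    (twin.snd.mem_left_of_conflation hconf hB₀ hS₀U)

lemma mem_left_of_factors (cp : σ.IsCotorsionPair U V) (h : σ.IsReflectionSeq S T U V z w)
    {W₀ : B} (hW₀ : W₀ ∈ U) {f : B₀ ⟶ W₀} {g : W₀ ⟶ Z} (hz : z = f ≫ g) : B₀ ∈ U := by
  obtain ⟨-, -, -, hsurj⟩ := h
  subst hz
  exact cp.mem_left_of_surjective_pull_comp hW₀ f g hsurj

end IsReflectionSeq

end ExtStruct

/-- Lemma 2.17 / `Ceq`. For a reflection sequence
`B₀ --p_B--> B⁺ ↠ S^U` of a twin cotorsion pair, the following are equivalent: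
(a) `B₀ ∈ U`; (b) `B⁺ ∈ W = T ∩ U` (i.e. `B⁺ ≅ 0` in `B̄⁺`); (c) `p̄_B = 0` in `B̄ = B/W`. -/
theorem statement_4 {B : Type u} [Category.{v} B] [Preadditive B] [HasFiniteBiproducts B]
    (σ : ExtStruct B) {S T U V : Set B} (twin : σ.IsTwinCotorsionPair S T U V)
    {B₀ Bp SU : B} (pB : B₀ ⟶ Bp) (q : Bp ⟶ SU)
    (hrefl : σ.IsReflectionSeq S T U V pB q) :
    (B₀ ∈ U ↔ Bp ∈ T ∩ U) ∧
    (B₀ ∈ U ↔ (toQuot (T ∩ U : Set B)).map pB = 0) := by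
  have factors_imp : (∃ Z ∈ T ∩ U, ∃ f : B₀ ⟶ Z, ∃ g : Z ⟶ Bp, pB = f ≫ g) → B₀ ∈ U :=
    fun ⟨_, hZ, _, _, hfac⟩ => hrefl.mem_left_of_factors twin.snd hZ.2 hfac
  have core_imp (hBp : Bp ∈ T ∩ U) : ∃ Z ∈ T ∩ U, ∃ f : B₀ ⟶ Z, ∃ g : Z ⟶ Bp, pB = f ≫ g :=
    ⟨Bp, hBp, pB, 𝟙 Bp, (Category.comp_id pB).symm⟩
  rw [toQuot_map_eq_zero_iff (twin.fst.addV.inter twin.snd.addU)]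
  exact ⟨⟨hrefl.mem_core twin, factors_imp ∘ core_imp⟩,
    ⟨core_imp ∘ hrefl.mem_core twin, factors_imp⟩⟩

end ExtriHearts
end

section
/- Let (U,V) be a cotorsion pair on an extriangulated category B, let A, B ∈ H = B^+ ∩ B^-, and let C ↣ A ↠ B be a conflation in B. If the image f̲ in the heart H̲ of the deflation f: A → B is an epimorphism in H̲, then C ∈ B^-. -/
namespace ExtriHearts

open CategoryTheory CategoryTheory.Limits Opposite

attribute [local instance] CategoryTheory.Limits.hasBinaryBiproducts_of_finite_biproducts

universe v u v₂ u₂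

/-!
Write `A₀ ∈ B⁻` as `A₀ ↣ W_A ↠ U_A`. Axiom (ET4), applied to `C₀ ↣ A₀ ↠ B₀` and this
conflation, gives conflations `C₀ ↣ W_A ↠ E` and `B₀ ↣ E ↠ U_A`, so it suffices that `E ∈ U`,
i.e. `E(E, V) = 0`; by the long exact sequence this reduces to: every `γ ∈ E(B₀, V')` with
`V' ∈ V` and `f^* γ = 0` vanishes. Realize `γ` by `V' ↣ M ↠ B₀` and compose with a
`V`-approximation `M ↣ V_M ↠ U_M`; (ET4) produces `t : B₀ → T` with `T` in the heart and
`γ = t^* κ`. As `f^* γ = 0`, `f` lifts to `M`, so `f ≫ t` factors through `W_A`. Since `f̲` is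
epic, `t` factors through `W`, and `γ = t^* κ = 0` because `E(W, V') = 0`.
-/

namespace ExtStruct

variable {B : Type u} [Category.{v} B] [Preadditive B] [HasFiniteBiproducts B]
variable (σ : ExtStruct B)

section Functoriality

lemma pull_comp {C' C'' C A : B} (c₁ : C' ⟶ C'') (c₂ : C'' ⟶ C) (δ : σ.Ext C A) :
    σ.pull (c₁ ≫ c₂) δ = σ.pull c₁ (σ.pull c₂ δ) := by
  show (σ.E.map (c₁ ≫ c₂).op).app A δ = (σ.E.map c₁.op).app A ((σ.E.map c₂.op).app A δ)
  rw [op_comp, σ.E.map_comp]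
  rfl

lemma push_comp {C A A' A'' : B} (a₁ : A ⟶ A') (a₂ : A' ⟶ A'') (δ : σ.Ext C A) :
    σ.push (a₁ ≫ a₂) δ = σ.push a₂ (σ.push a₁ δ) := by
  show ((σ.E.obj (op C)).map (a₁ ≫ a₂)) δ = _
  rw [CategoryTheory.Functor.map_comp]
  rfl

lemma pull_id {C A : B} (δ : σ.Ext C A) : σ.pull (𝟙 C) δ = δ := by
  show (σ.E.map (𝟙 C).op).app A δ = δ
  rw [op_id, σ.E.map_id]
  rfl

lemma push_id {C A : B} (δ : σ.Ext C A) : σ.push (𝟙 A) δ = δ := by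
  show ((σ.E.obj (op C)).map (𝟙 A)) δ = δ
  rw [CategoryTheory.Functor.map_id]
  rfl

lemma push_pull {C' C A A' : B} (c : C' ⟶ C) (a : A ⟶ A') (δ : σ.Ext C A) :
    σ.push a (σ.pull c δ) = σ.pull c (σ.push a δ) :=
  (ConcreteCategory.congr_hom ((σ.E.map c.op).naturality a) δ).symm

lemma push_zero {C A A' : B} (a : A ⟶ A') : σ.push a (0 : σ.Ext C A) = 0 :=
  map_zero _

lemma pull_zero {C' C A : B} (c : C' ⟶ C) : σ.pull c (0 : σ.Ext C A) = 0 :=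
  map_zero _

lemma pull_add {C' C A : B} (c₁ c₂ : C' ⟶ C) (δ : σ.Ext C A) :
    σ.pull (c₁ + c₂) δ = σ.pull c₁ δ + σ.pull c₂ δ := by
  let := σ.additive_snd A
  show (σ.E.flip.obj A).map (c₁ + c₂).op δ =
    (σ.E.flip.obj A).map c₁.op δ + (σ.E.flip.obj A).map c₂.op δ
  rw [op_add, Functor.map_add]
  rfl

lemma pull_eq_zero_of_mem_wIdeal {W : Set B} {A X Y : B}
    (hW : ∀ Z ∈ W, ∀ ε : σ.Ext Z A, ε = 0) {c : X ⟶ Y} (hc : c ∈ wIdeal W X Y)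
    (δ : σ.Ext Y A) : σ.pull c δ = 0 := by
  let pullδ : (X ⟶ Y) →+ σ.Ext X A := AddMonoidHom.mk' (σ.pull · δ) (σ.pull_add · · δ)
  suffices wIdeal W X Y ≤ pullδ.ker from this hc
  rw [wIdeal, AddSubgroup.closure_le]
  rintro _ ⟨Z, hZ, p, q, rfl⟩
  show σ.pull (p ≫ q) δ = 0
  rw [pull_comp, hW Z hZ (σ.pull q δ), pull_zero]

end Functoriality

section Conflations

variable {σ}

lemma iso_biprod_of_realize_zero {A C X : B} {x : A ⟶ X} {y : X ⟶ C}
    (h : σ.realize (0 : σ.Ext C A) x y) :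
    ∃ b : X ≅ A ⊞ C, x ≫ b.hom = biprod.inl ∧ b.hom ≫ biprod.snd = y :=
  σ.realize_unique 0 x y _ _ h (σ.realize_zero A C)

lemma exists_comp_eq_of_push_eq_zero {A C X Q : B} {δ : σ.Ext C A} {x : A ⟶ X} {y : X ⟶ C}
    (h : σ.realize δ x y) (ρ : A ⟶ Q) (hρ : σ.push ρ δ = 0) :
    ∃ τ : X ⟶ Q, x ≫ τ = ρ := by
  obtain ⟨b, hb, -⟩ := σ.realize_map δ (0 : σ.Ext C Q) x y biprod.inl biprod.snd ρ (𝟙 C)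
    h (σ.realize_zero Q C) (by rw [hρ, σ.pull_zero])
  exact ⟨b ≫ biprod.fst, by rw [← Category.assoc, hb, Category.assoc, biprod.inl_fst,
    Category.comp_id]⟩

lemma exists_comp_eq_of_pull_eq_zero {A C X Q : B} {δ : σ.Ext C A} {x : A ⟶ X} {y : X ⟶ C}
    (h : σ.realize δ x y) (ζ : Q ⟶ C) (hζ : σ.pull ζ δ = 0) :
    ∃ ξ : Q ⟶ X, ξ ≫ y = ζ := by
  obtain ⟨b, -, hb⟩ := σ.realize_map (0 : σ.Ext Q A) δ biprod.inl biprod.snd x y (𝟙 A) ζ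
    (σ.realize_zero A Q) h (by rw [σ.push_id, hζ])
  exact ⟨biprod.inr ≫ b, by rw [Category.assoc, ← hb, biprod.inr_snd_assoc]⟩

lemma exists_eq_pull_of_pull_eq_zero {A X C Q : B} {δ : σ.Ext C A} {x : A ⟶ X}
    {y : X ⟶ C} (h : σ.realize δ x y) (γ : σ.Ext X Q) (hγ : σ.pull x γ = 0) :
    ∃ γ' : σ.Ext C Q, γ = σ.pull y γ' := by
  obtain ⟨M, m, k, hM⟩ := σ.realize_ex γ
  obtain ⟨N, e, _, _, δ'', -, -, -, hsplit, -, hδ''⟩ := σ.et4op γ m k δ x y hM h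
  rw [hγ] at hsplit
  -- the conflation realizing `x^* γ = 0` splits, so `e` is a split monomorphism
  obtain ⟨b, hb, -⟩ := iso_biprod_of_realize_zero hsplit
  have hr : e ≫ b.hom ≫ biprod.fst = 𝟙 Q := by
    rw [← Category.assoc, hb, biprod.inl_fst]
  refine ⟨σ.push (b.hom ≫ biprod.fst) δ'', ?_⟩
  rw [← σ.push_pull, hδ'', ← σ.push_comp, hr, σ.push_id]

lemma exists_eq_push_of_push_eq_zero {A X C Q : B} {δ : σ.Ext C A} {x : A ⟶ X}
    {y : X ⟶ C} (h : σ.realize δ x y) (γ : σ.Ext Q X) (hγ : σ.push y γ = 0) :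
    ∃ γ' : σ.Ext Q A, γ = σ.push x γ' := by
  obtain ⟨M, m, k, hM⟩ := σ.realize_ex γ
  obtain ⟨N, _, e, _, δ'', -, -, -, hsplit, -, hδ''⟩ := σ.et4 δ x y γ m k h hM
  rw [hγ] at hsplit
  obtain ⟨b, -, hb⟩ := iso_biprod_of_realize_zero hsplit
  have hs : (biprod.inr ≫ b.inv) ≫ e = 𝟙 Q := by
    rw [← hb, Category.assoc, b.inv_hom_id_assoc, biprod.inr_snd]
  refine ⟨σ.pull (biprod.inr ≫ b.inv) δ'', ?_⟩
  rw [σ.push_pull, hδ'', ← σ.pull_comp, hs, σ.pull_id]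

end Conflations

section Heart

variable {σ} (U V : Set B)

lemma sHeartHom_comp {X Y Z : B} (hX : X ∈ σ.sHeartSet U V) (hY : Y ∈ σ.sHeartSet U V)
    (hZ : Z ∈ σ.sHeartSet U V) (f : X ⟶ Y) (g : Y ⟶ Z) :
    σ.sHeartHom U V hX hY f ≫ σ.sHeartHom U V hY hZ g = σ.sHeartHom U V hX hZ (f ≫ g) :=
  ObjectProperty.hom_ext _ ((toQuot (U ∩ V : Set B)).map_comp f g).symm

lemma sHeartHom_eq_zero_iff {X Y : B} (hX : X ∈ σ.sHeartSet U V) (hY : Y ∈ σ.sHeartSet U V)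
    (f : X ⟶ Y) : σ.sHeartHom U V hX hY f = 0 ↔ f ∈ wIdeal (U ∩ V) X Y := by
  refine ObjectProperty.hom_ext_iff.trans ?_
  show (toQuot _).map f = (toQuot _).map 0 ↔ _
  rw [Quotient.functor_map_eq_iff]
  show f - 0 ∈ _ ↔ _
  rw [sub_zero]

end Heart

namespace IsCotorsionPair

variable {σ} {U V : Set B}

lemma mem_U_of_ext_eq_zero (cp : σ.IsCotorsionPair U V) {X : B}
    (h : ∀ V' ∈ V, ∀ δ : σ.Ext X V', δ = 0) : X ∈ U := by
  obtain ⟨V₀, U₀, f, g, hV₀, hU₀, δ, hδ⟩ := cp.resolve X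
  rw [h V₀ hV₀ δ] at hδ
  obtain ⟨b, -, hb⟩ := iso_biprod_of_realize_zero hδ
  refine cp.addU.summand_mem X U₀ hU₀ (biprod.inr ≫ b.inv) g ?_
  rw [← hb, Category.assoc, b.inv_hom_id_assoc, biprod.inr_snd]

lemma mem_V_of_ext_eq_zero (cp : σ.IsCotorsionPair U V) {X : B}
    (h : ∀ U' ∈ U, ∀ δ : σ.Ext U' X, δ = 0) : X ∈ V := by
  obtain ⟨V₀, U₀, f, g, hV₀, hU₀, δ, hδ⟩ := cp.coresolve X
  rw [h U₀ hU₀ δ] at hδ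
  obtain ⟨b, hb, -⟩ := iso_biprod_of_realize_zero hδ
  refine cp.addV.summand_mem X V₀ hV₀ f (b.hom ≫ biprod.fst) ?_
  rw [← Category.assoc, hb, biprod.inl_fst]

lemma mem_V_of_realize (cp : σ.IsCotorsionPair U V) {A X C : B} {δ : σ.Ext C A} {x : A ⟶ X}
    {y : X ⟶ C} (h : σ.realize δ x y) (hA : A ∈ V) (hC : C ∈ V) : X ∈ V := by
  refine cp.mem_V_of_ext_eq_zero fun U' hU' γ => ?_
  obtain ⟨γ', rfl⟩ := exists_eq_push_of_push_eq_zero h γ (cp.ext_vanish hU' hC _)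
  rw [cp.ext_vanish hU' hA γ', σ.push_zero]

lemma mem_sPos_of_realize (cp : σ.IsCotorsionPair U V) {V' Y X : B} {δ : σ.Ext X V'}
    {i : V' ⟶ Y} {p : Y ⟶ X} (h : σ.realize δ i p) (hV' : V' ∈ V) (hY : Y ∈ V) :
    X ∈ σ.sPos U V := by
  obtain ⟨V₀, U₀, i₀, p₀, hV₀, hU₀, η, hη⟩ := cp.resolve Y
  obtain ⟨N, _, _, m, δ'', -, -, hN, hV₀N, -, -⟩ := σ.et4op η i₀ p₀ δ i p hη h
  exact ⟨N, U₀, m, p₀ ≫ p, cp.mem_V_of_realize hV₀N hV₀ hV',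
    ⟨hU₀, cp.mem_V_of_realize hη hV₀ hY⟩, δ'', hN⟩

lemma mem_sNeg_of_realize (cp : σ.IsCotorsionPair U V) {X Y Z : B} {θ : σ.Ext Z X}
    {i : X ⟶ Y} {p : Y ⟶ Z} (h : σ.realize θ i p) (hX : X ∈ σ.sNeg U V) (hZ : Z ∈ U) :
    Y ∈ σ.sNeg U V := by
  obtain ⟨W_X, U_X, w, u, hW_X, hU_X, ψ, hψ⟩ := hX
  obtain ⟨V_Y, U_Y, c, r, hV_Y, hU_Y, κ, hκ⟩ := cp.coresolve Y
  -- `Y ↣ V_Y ↠ U_Y` witnesses `Y ∈ B⁻` once `E(V_Y, V') = 0`: a class `γ` is detected by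
  -- `c^* γ`, then by `(i ≫ c)^* γ`, and `i ≫ c` factors through `W_X`
  refine ⟨V_Y, U_Y, c, r, ⟨cp.mem_U_of_ext_eq_zero fun V' hV' γ => ?_, hV_Y⟩, hU_Y, κ, hκ⟩
  obtain ⟨τ, hτ⟩ := exists_comp_eq_of_push_eq_zero hψ (i ≫ c) (cp.ext_vanish hU_X hV_Y _)
  have hγi : σ.pull i (σ.pull c γ) = 0 := by
    rw [← σ.pull_comp, ← hτ, σ.pull_comp, cp.ext_vanish hW_X.1 hV' (σ.pull τ γ), σ.pull_zero]
  obtain ⟨γ₁, hγ₁⟩ := exists_eq_pull_of_pull_eq_zero h _ hγi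
  have hγc : σ.pull c γ = 0 := by rw [hγ₁, cp.ext_vanish hZ hV' γ₁, σ.pull_zero]
  obtain ⟨γ₂, rfl⟩ := exists_eq_pull_of_pull_eq_zero hκ γ hγc
  rw [cp.ext_vanish hU_Y hV' γ₂, σ.pull_zero]

lemma eq_zero_of_pull_eq_zero_of_epi (cp : σ.IsCotorsionPair U V) {A₀ B₀ : B} (f : A₀ ⟶ B₀)
    (hA : A₀ ∈ σ.sHeartSet U V) (hB : B₀ ∈ σ.sHeartSet U V) [Epi (σ.sHeartHom U V hA hB f)]
    {V' : B} (hV' : V' ∈ V) (γ : σ.Ext B₀ V') (hγ : σ.pull f γ = 0) : γ = 0 := by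
  obtain ⟨W_A, U_A, a, _, hW_A, hU_A, ε, hε⟩ := hA.2
  obtain ⟨M, m, k, hM⟩ := σ.realize_ex γ
  obtain ⟨f', hf'⟩ := exists_comp_eq_of_pull_eq_zero hM f hγ
  obtain ⟨V_M, U_M, c, r, hV_M, hU_M, κ_M, hκ_M⟩ := cp.coresolve M
  obtain ⟨T, t, _, h, κ, hkt, -, hV_MT, hB₀T, hκ, -⟩ := σ.et4 γ m k κ_M c r hM hκ_M
  have hT : T ∈ σ.sHeartSet U V :=
    ⟨cp.mem_sPos_of_realize hV_MT hV' hV_M, cp.mem_sNeg_of_realize hB₀T hB.2 hU_M⟩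
  obtain ⟨τ, hτ⟩ := exists_comp_eq_of_push_eq_zero hε (f' ≫ c) (cp.ext_vanish hU_A hV_M _)
  have hft : f ≫ t ∈ wIdeal (U ∩ V) A₀ T := by
    refine AddSubgroup.subset_closure ⟨W_A, hW_A, a, τ ≫ h, ?_⟩
    rw [← hf', Category.assoc, ← hkt, ← Category.assoc, ← hτ, Category.assoc]
  have ht : t ∈ wIdeal (U ∩ V) B₀ T := by
    rw [← sHeartHom_eq_zero_iff U V hB hT]
    refine zero_of_epi_comp (σ.sHeartHom U V hA hB f) ?_
    rwa [sHeartHom_comp, sHeartHom_eq_zero_iff]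
  rw [← hκ]
  exact σ.pull_eq_zero_of_mem_wIdeal (fun Z hZ => cp.ext_vanish hZ.1 hV') ht κ

end IsCotorsionPair

end ExtStruct

/-- Lemma 3.1 / `C17`. Let `(U,V)` be a cotorsion pair, `A₀, B₀ ∈ H`, and
`C₀ ↣ A₀ --f--> B₀` a conflation in `B`.  If the image `f̄` of the deflation `f` is an
epimorphism in the heart `H̄`, then `C₀ ∈ B⁻`. -/
theorem statement_9 {B : Type u} [Category.{v} B] [Preadditive B] [HasFiniteBiproducts B]
    (σ : ExtStruct B) {U V : Set B} (cp : σ.IsCotorsionPair U V)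
    {C₀ A₀ B₀ : B} (g : C₀ ⟶ A₀) (f : A₀ ⟶ B₀) (hconf : σ.Conflation g f)
    (hA : A₀ ∈ σ.sHeartSet U V) (hB : B₀ ∈ σ.sHeartSet U V)
    (hepi : Epi (σ.sHeartHom U V hA hB f)) :
    C₀ ∈ σ.sNeg U V := by
  obtain ⟨δ, hδ⟩ := hconf
  obtain ⟨W_A, U_A, a, b, hW_A, hU_A, ε, hε⟩ := hA.2
  obtain ⟨E₀, d, _, h, δ'', had, -, hC₀, hB₀, -, -⟩ := σ.et4 δ g f ε a b hδ hε
  refine ⟨W_A, E₀, g ≫ a, h, hW_A, cp.mem_U_of_ext_eq_zero fun V' hV' θ => ?_, δ'', hC₀⟩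
  have hθd : σ.pull d θ = 0 := by
    refine cp.eq_zero_of_pull_eq_zero_of_epi f hA hB hV' _ ?_
    rw [← σ.pull_comp, ← had, σ.pull_comp, cp.ext_vanish hW_A.1 hV' (σ.pull h θ),
      σ.pull_zero]
  obtain ⟨θ', rfl⟩ := ExtStruct.exists_eq_pull_of_pull_eq_zero hB₀ θ hθd
  rw [cp.ext_vanish hU_A hV' θ', σ.pull_zero]

end ExtriHearts
end

section
/- Let B be an extriangulated category with enough projectives, and let (U,V) be a rigid cotorsion pair on B (i.e. U ⊆ V). Then the heart H̲ of (U,V) has enough projectives. -/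
namespace ExtriHearts

open CategoryTheory CategoryTheory.Limits Opposite

attribute [local instance] CategoryTheory.Limits.hasBinaryBiproducts_of_finite_biproducts

universe v u v₂ u₂

/-! For a rigid cotorsion pair every object lies in `B⁺`, so the heart is `B⁻/W`, and
projectives of `B` lie in `U ⊆ V`, hence in `W`. Let `X ↣ W₀ ↠ U₀` (extension `δ`) exhibit
`X ∈ B⁻` and take `K ↣ P ↠ U₀` (extension `θ`) with `P` projective; then `K ∈ B⁻` and,
`θ` being universal among extensions of `U₀`, `δ = g_* θ` for some `g : K ⟶ X`.

Since `E(U, W) = 0`, a morphism `w` with `g ≫ w` factoring through `W` has `w_* δ = 0`, so it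
factors through `W₀`: `g` is an epimorphism of the heart. For projectivity, let `e : Y ⟶ Z` be
an epimorphism of the heart, with `Y ↣ W₁ ↠ U₁` (extension `δ₁`). A realization
`Z ↣ E ↠ U₁` of `e_* δ₁` can be chosen with `E ∈ B⁻`; then `Z ⟶ E` vanishes in the heart, so
for `φ : K ⟶ Z` the extension `φ_* θ` comes from `Hom(U₀, U₁)` by exactness, hence equals
`(ψ ≫ e)_* θ` for some `ψ : K ⟶ Y`, and `φ - ψ ≫ e` factors through `P`. -/

namespace PreExtStruct

variable {B : Type u} [Category.{v} B] [Preadditive B] (σ : PreExtStruct B)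

lemma push_push {C A A' A'' : B} (a : A ⟶ A') (b : A' ⟶ A'') (δ : σ.Ext C A) :
    σ.push b (σ.push a δ) = σ.push (a ≫ b) δ := by
  simp [push]

lemma pull_pull {C'' C' C A : B} (c' : C'' ⟶ C') (c : C' ⟶ C) (δ : σ.Ext C A) :
    σ.pull c' (σ.pull c δ) = σ.pull (c' ≫ c) δ := by
  simp [pull]

lemma pull_id {C A : B} (δ : σ.Ext C A) : σ.pull (𝟙 C) δ = δ := by
  simp [pull]

lemma push_pull {C' C A A' : B} (c : C' ⟶ C) (a : A ⟶ A') (δ : σ.Ext C A) :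
    σ.push a (σ.pull c δ) = σ.pull c (σ.push a δ) := by
  simp [push, pull]

lemma push_zero {C A A' : B} (a : A ⟶ A') : σ.push a (0 : σ.Ext C A) = 0 :=
  map_zero _

end PreExtStruct

section IdealQuotient

variable {D : Type u₂} [Category.{v₂} D] [Preadditive D] {W : Set D}

lemma mem_wIdeal_of_factor {X Y Z : D} (hZ : Z ∈ W) (p : X ⟶ Z) (q : Z ⟶ Y) :
    p ≫ q ∈ wIdeal W X Y :=
  AddSubgroup.subset_closure ⟨Z, hZ, p, q, rfl⟩

lemma toQuot_map_eq_iff {X Y : D} (f g : X ⟶ Y) :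
    (toQuot W).map f = (toQuot W).map g ↔ f - g ∈ wIdeal W X Y :=
  Quotient.functor_map_eq_iff (wRel W) f g

lemma toQuot_map_eq_zero_iff_s16 {X Y : D} (f : X ⟶ Y) :
    (toQuot W).map f = 0 ↔ f ∈ wIdeal W X Y :=
  (toQuot_map_eq_iff f 0).trans (by rw [sub_zero])

end IdealQuotient

namespace ExtStruct

open ZeroObject

variable {B : Type u} [Category.{v} B] [Preadditive B] [HasFiniteBiproducts B] (σ : ExtStruct B)

def pushHom {C A : B} (θ : σ.Ext C A) (A' : B) : (A ⟶ A') →+ σ.Ext C A' where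
  toFun f := σ.push f θ
  map_zero' := by
    have := σ.additive_fst (op C)
    simp [PreExtStruct.push]
  map_add' f g := by
    have := σ.additive_fst (op C)
    simp [PreExtStruct.push]

lemma push_sub {C A A' : B} (θ : σ.Ext C A) (f g : A ⟶ A') :
    σ.push (f - g) θ = σ.push f θ - σ.push g θ :=
  map_sub (σ.pushHom θ A') f g

section Realizations

variable {σ} {A X C : B} {δ : σ.Ext C A} {x : A ⟶ X} {y : X ⟶ C}

lemma exists_extend_of_push_eq_zero (hδ : σ.realize δ x y) {T : B} (s : A ⟶ T)
    (hs : σ.push s δ = 0) : ∃ s' : X ⟶ T, x ≫ s' = s := by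
  obtain ⟨b, hb, -⟩ := σ.realize_map δ 0 x y biprod.inl biprod.snd s (𝟙 C) hδ
    (σ.realize_zero T C) (by rw [hs, σ.pull_zero])
  exact ⟨b ≫ biprod.fst, by rw [reassoc_of% hb, biprod.inl_fst, Category.comp_id]⟩

lemma exists_lift_of_pull_eq_zero (hδ : σ.realize δ x y) {T : B} (c : T ⟶ C)
    (hc : σ.pull c δ = 0) : ∃ b : T ⟶ X, b ≫ y = c := by
  obtain ⟨b, -, hb⟩ := σ.realize_map 0 δ biprod.inl biprod.snd x y (𝟙 A) c
    (σ.realize_zero A T) hδ (by rw [σ.push_id, hc])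
  exact ⟨biprod.inr ≫ b, by rw [Category.assoc, ← hb, biprod.inr_snd_assoc]⟩

lemma exists_desc_of_comp_eq_zero (hδ : σ.realize δ x y) {T : B} (n : X ⟶ T)
    (hn : x ≫ n = 0) : ∃ k : C ⟶ T, y ≫ k = n := by
  obtain ⟨k, -, hk⟩ := σ.et3 δ 0 x y biprod.inl biprod.snd hδ (σ.realize_zero 0 T) 0
    (n ≫ biprod.inr) (by rw [reassoc_of% hn, zero_comp, zero_comp])
  exact ⟨k, by rw [hk, Category.assoc, biprod.inr_snd, Category.comp_id]⟩

lemma exists_pull_eq_of_push_eq_zero (hδ : σ.realize δ x y) {C₁ : B} (ε : σ.Ext C₁ A)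
    (hε : σ.push x ε = 0) : ∃ c : C₁ ⟶ C, σ.pull c δ = ε := by
  obtain ⟨M, x', y', hε'⟩ := σ.realize_ex ε
  obtain ⟨b, hb⟩ := exists_extend_of_push_eq_zero hε' x hε
  obtain ⟨c, hc, -⟩ := σ.et3 ε δ x' y' x y hε' hδ (𝟙 A) b (by rw [hb, Category.id_comp])
  exact ⟨c, by rw [← hc, σ.push_id]⟩

lemma exists_push_eq_of_isProj (hδ : σ.realize δ x y) (hX : σ.IsProj X) {A₁ : B}
    (ε : σ.Ext C A₁) : ∃ a : A ⟶ A₁, σ.push a δ = ε := by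
  obtain ⟨M, x', y', hε⟩ := σ.realize_ex ε
  obtain ⟨b, hb⟩ := exists_lift_of_pull_eq_zero hε y (hX _ _)
  obtain ⟨a, ha, -⟩ := σ.et3op δ ε x y x' y' hδ hε b (𝟙 C) (by rw [hb, Category.comp_id])
  exact ⟨a, by rw [ha, σ.pull_id]⟩

lemma isIso_of_realize_endo (hδ : σ.realize δ x y) (v : X ⟶ X) (hx : x ≫ v = x)
    (hy : v ≫ y = y) : IsIso v := by
  obtain ⟨n, rfl⟩ : ∃ n, v = 𝟙 X + n := ⟨v - 𝟙 X, by abel⟩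
  obtain ⟨k, rfl⟩ := exists_desc_of_comp_eq_zero hδ n (by simpa using hx)
  have hsq : (y ≫ k) ≫ y ≫ k = 0 := by
    simp only [Preadditive.add_comp, Category.id_comp, add_eq_left] at hy
    rw [← Category.assoc, hy, zero_comp]
  refine ⟨𝟙 X - y ≫ k, ?_, ?_⟩ <;>
    simp only [Preadditive.add_comp, Preadditive.comp_sub, Preadditive.sub_comp,
      Preadditive.comp_add, Category.id_comp, Category.comp_id, hsq] <;> abel

lemma isIso_of_realize_map {A' C' X' : B} {δ' : σ.Ext C' A'} {x' : A' ⟶ X'} {y' : X' ⟶ C'}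
    (hδ : σ.realize δ x y) (hδ' : σ.realize δ' x' y') (a : A ≅ A') (c : C ≅ C')
    (h : σ.push a.hom δ = σ.pull c.hom δ') (b : X ⟶ X') (hx : x ≫ b = a.hom ≫ x')
    (hy : y ≫ c.hom = b ≫ y') : IsIso b := by
  have h' : σ.push a.inv δ' = σ.pull c.inv δ := by
    have := congrArg (fun ε => σ.push a.inv (σ.pull c.inv ε)) h
    simpa [σ.push_pull, σ.push_push, σ.pull_pull, σ.push_id, σ.pull_id] using this.symm
  obtain ⟨b', hx', hy'⟩ := σ.realize_map δ' δ x' y' x y a.inv c.inv hδ' hδ h'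
  have hbb' : IsIso (b ≫ b') := isIso_of_realize_endo hδ _
    (by rw [reassoc_of% hx, hx', a.hom_inv_id_assoc])
    (by rw [Category.assoc, ← hy', ← reassoc_of% hy, c.hom_inv_id, Category.comp_id])
  have hb'b : IsIso (b' ≫ b) := isIso_of_realize_endo hδ' _
    (by rw [reassoc_of% hx', hx, a.inv_hom_id_assoc])
    (by rw [Category.assoc, ← hy, ← reassoc_of% hy', c.inv_hom_id, Category.comp_id])
  have : IsSplitMono b :=
    IsSplitMono.mk' ⟨b' ≫ inv (b ≫ b'), by rw [← Category.assoc, IsIso.hom_inv_id]⟩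
  have : IsSplitEpi b :=
    IsSplitEpi.mk' ⟨inv (b' ≫ b) ≫ b', by rw [Category.assoc, IsIso.inv_hom_id]⟩
  exact isIso_of_mono_of_isSplitEpi b

lemma realize_iso_left (hδ : σ.realize δ x y) {A' : B} (e : A ≅ A') :
    σ.realize (σ.push e.hom δ) (e.inv ≫ x) y := by
  obtain ⟨X', x', y', hδ'⟩ := σ.realize_ex (σ.push e.hom δ)
  obtain ⟨b, hx, hy⟩ := σ.realize_map δ _ x y x' y' e.hom (𝟙 C) hδ hδ' (σ.pull_id _).symm
  have := isIso_of_realize_map hδ hδ' e (Iso.refl C) (σ.pull_id _).symm b hx hy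
  convert σ.realize_iso _ x' y' (asIso b).symm hδ' using 1
  · simp [hx]
  · simp [← hy]

lemma realize_sum_id_right (hδ : σ.realize δ x y) (Q : B) :
    σ.realize (σ.pull biprod.fst δ : σ.Ext (C ⊞ Q) A) (x ≫ biprod.inl)
      (biprod.map y (𝟙 Q)) := by
  have h0 : σ.realize (0 : σ.Ext Q 0) 0 (𝟙 Q) := by
    simpa using σ.realize_iso 0 biprod.inl biprod.snd (isoZeroBiprod (isZero_zero B)).symm
      (σ.realize_zero 0 Q)
  convert realize_iso_left (σ.realize_sum δ 0 x y 0 (𝟙 Q) hδ h0)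
    (isoBiprodZero (isZero_zero B)).symm using 1
  · simp [PreExtStruct.sumExt, σ.push_push, σ.push_id, σ.pull_zero, σ.push_zero]
  · simp

lemma realize_cograph {Y Q : B} (τ : Y ⟶ Q) :
    σ.realize (0 : σ.Ext Q Y) (biprod.lift τ (𝟙 Y)) (biprod.desc (𝟙 Q) (-τ)) := by
  let e : Y ⊞ Q ≅ Q ⊞ Y :=
    { hom := biprod.desc (biprod.lift τ (𝟙 Y)) (biprod.lift (𝟙 Q) 0)
      inv := biprod.desc (biprod.lift 0 (𝟙 Q)) (biprod.lift (𝟙 Y) (-τ))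
      hom_inv_id := by ext <;> simp
      inv_hom_id := by ext <;> simp }
  convert σ.realize_iso 0 biprod.inl biprod.snd e (σ.realize_zero Y Q) using 1
  · simp [e]
  · ext <;> simp [e]

end Realizations

section CotorsionPair

variable {σ} {U V : Set B}

namespace IsCotorsionPair

lemma push_eq_zero_of_mem_wIdeal (cp : σ.IsCotorsionPair U V) {C A A' : B} (hC : C ∈ U)
    (θ : σ.Ext C A) {f : A ⟶ A'} (hf : f ∈ wIdeal (U ∩ V) A A') : σ.push f θ = 0 := by
  suffices wIdeal (U ∩ V) A A' ≤ (σ.pushHom θ A').ker from this hf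
  rw [wIdeal, AddSubgroup.closure_le]
  rintro _ ⟨Z, hZ, p, q, rfl⟩
  change σ.push (p ≫ q) θ = 0
  rw [← σ.push_push, cp.ext_vanish hC hZ.2 (σ.push p θ), σ.push_zero]

lemma mem_left_of_isProj (cp : σ.IsCotorsionPair U V) {P : B} (hP : σ.IsProj P) : P ∈ U := by
  obtain ⟨_, U₀, _, g, -, hU₀, δ, hδ⟩ := cp.resolve P
  obtain ⟨s, hs⟩ := exists_lift_of_pull_eq_zero hδ (𝟙 P) (hP _ _)
  exact cp.addU.summand_mem P U₀ hU₀ s g hs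

lemma mem_sPos (cp : σ.IsCotorsionPair U V) (hrigid : U ⊆ V) (X : B) : X ∈ σ.sPos U V := by
  obtain ⟨V₀, U₀, f, g, hV₀, hU₀, hfg⟩ := cp.resolve X
  exact ⟨V₀, U₀, f, g, hV₀, ⟨hU₀, hrigid hU₀⟩, hfg⟩

lemma exists_realize_mem_sNeg (cp : σ.IsCotorsionPair U V) {Z₀ W₁ : B}
    (hZ₀ : Z₀ ∈ σ.sNeg U V) (hW₁ : W₁ ∈ U ∩ V) (ε : σ.Ext W₁ Z₀) :
    ∃ (E : B) (d : Z₀ ⟶ E) (q : E ⟶ W₁), σ.realize ε d q ∧ E ∈ σ.sNeg U V := by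
  obtain ⟨W, U₀, x, y, hW, hU₀, δ, hδ⟩ := hZ₀
  obtain ⟨τ, rfl⟩ := exists_pull_eq_of_push_eq_zero hδ ε (cp.ext_vanish hW₁.1 hW.2 _)
  -- composing the deflations of `δ ⊕ W₁` and of the split conflation `W₁ ↣ U₀ ⊞ W₁ ↠ U₀`
  -- yields `E ↣ W ⊞ W₁ ↠ U₀`
  obtain ⟨E, d, q, m, δ', -, -, hm, hdq, -, -⟩ :=
    σ.et4op _ _ _ _ _ _ (realize_sum_id_right hδ W₁) (realize_cograph τ)
  rw [σ.pull_pull, biprod.lift_fst] at hdq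
  exact ⟨E, d, q, hdq, W ⊞ W₁, U₀, m, _,
    ⟨cp.addU.biprod_mem _ _ hW.1 hW₁.1, cp.addV.biprod_mem _ _ hW.2 hW₁.2⟩, hU₀, δ', hm⟩

lemma mem_wIdeal_of_comp_mem_wIdeal (cp : σ.IsCotorsionPair U V) {K X W₀ U₀ T : B}
    (hU₀ : U₀ ∈ U) (hW₀ : W₀ ∈ U ∩ V) {θ : σ.Ext U₀ K} {g : K ⟶ X} {x₀ : X ⟶ W₀}
    {y₀ : W₀ ⟶ U₀} (hδ : σ.realize (σ.push g θ) x₀ y₀) {w : X ⟶ T}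
    (hw : g ≫ w ∈ wIdeal (U ∩ V) K T) : w ∈ wIdeal (U ∩ V) X T := by
  obtain ⟨s, rfl⟩ := exists_extend_of_push_eq_zero hδ w
    (by rw [σ.push_push]; exact cp.push_eq_zero_of_mem_wIdeal hU₀ θ hw)
  exact mem_wIdeal_of_factor hW₀ x₀ s

lemma exists_sub_comp_mem_wIdeal (cp : σ.IsCotorsionPair U V) (hrigid : U ⊆ V)
    {K P U₀ : B} {θ : σ.Ext U₀ K} {i : K ⟶ P} {p : P ⟶ U₀} (hθ : σ.realize θ i p)
    (hP : σ.IsProj P) (hU₀ : U₀ ∈ U) {Y Z : B} (hY : Y ∈ σ.sNeg U V) (hZ : Z ∈ σ.sNeg U V)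
    (e : Y ⟶ Z) (he : ∀ ⦃T : B⦄, T ∈ σ.sHeartSet U V → ∀ w : Z ⟶ T,
      e ≫ w ∈ wIdeal (U ∩ V) Y T → w ∈ wIdeal (U ∩ V) Z T) (φ : K ⟶ Z) :
    ∃ ψ : K ⟶ Y, φ - ψ ≫ e ∈ wIdeal (U ∩ V) K Z := by
  obtain ⟨W₁, U₁, x₁, y₁, hW₁, hU₁, δ, hδ⟩ := hY
  obtain ⟨E, d, q, hdq, hE⟩ := cp.exists_realize_mem_sNeg hZ ⟨hU₁, hrigid hU₁⟩ (σ.push e δ)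
  -- `d : Z ⟶ E` is a cokernel of `e` in the heart, so it vanishes there
  obtain ⟨h, hh, -⟩ := σ.realize_map δ _ x₁ y₁ d q e (𝟙 U₁) hδ hdq (σ.pull_id _).symm
  have hd : d ∈ wIdeal (U ∩ V) Z E :=
    he ⟨cp.mem_sPos hrigid E, hE⟩ d (hh ▸ mem_wIdeal_of_factor hW₁ x₁ h)
  obtain ⟨c, hc⟩ := exists_pull_eq_of_push_eq_zero hdq (σ.push φ θ) (by
    rw [σ.push_push]
    exact cp.push_eq_zero_of_mem_wIdeal hU₀ θ (comp_left_mem_wIdeal _ φ hd))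
  obtain ⟨ψ, hψ⟩ := exists_push_eq_of_isProj hθ hP (σ.pull c δ)
  obtain ⟨t, ht⟩ := exists_extend_of_push_eq_zero hθ (φ - ψ ≫ e) (by
    rw [σ.push_sub, ← σ.push_push, hψ, σ.push_pull, hc, sub_self])
  have hPW : P ∈ U ∩ V := ⟨cp.mem_left_of_isProj hP, hrigid (cp.mem_left_of_isProj hP)⟩
  exact ⟨ψ, ht ▸ mem_wIdeal_of_factor hPW i t⟩

end IsCotorsionPair

end CotorsionPair

section Heart

variable {σ} {U V : Set B}

def heartHom {X Y : σ.SHeart U V} (f : X.obj.as ⟶ Y.obj.as) : X ⟶ Y :=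
  ObjectProperty.homMk ((toQuot (U ∩ V : Set B)).map f)

lemma exists_heartHom_eq {X Y : σ.SHeart U V} (f : X ⟶ Y) : ∃ f₀, heartHom f₀ = f := by
  obtain ⟨f₀, hf₀⟩ := (toQuot (U ∩ V : Set B)).map_surjective f.hom
  exact ⟨f₀, ObjectProperty.hom_ext _ hf₀⟩

lemma heartHom_comp {X Y Z : σ.SHeart U V} (f : X.obj.as ⟶ Y.obj.as)
    (g : Y.obj.as ⟶ Z.obj.as) : heartHom (f ≫ g) = heartHom f ≫ heartHom g :=
  ObjectProperty.hom_ext _ ((toQuot _).map_comp f g)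

lemma heartHom_eq_iff {X Y : σ.SHeart U V} (f g : X.obj.as ⟶ Y.obj.as) :
    heartHom f = heartHom g ↔ f - g ∈ wIdeal (U ∩ V) X.obj.as Y.obj.as := by
  rw [← toQuot_map_eq_iff]
  exact ⟨fun h => congrArg (·.hom) h, ObjectProperty.hom_ext _⟩

lemma heartHom_eq_zero_iff {X Y : σ.SHeart U V} (f : X.obj.as ⟶ Y.obj.as) :
    heartHom f = 0 ↔ f ∈ wIdeal (U ∩ V) X.obj.as Y.obj.as := by
  rw [← toQuot_map_eq_zero_iff_s16]
  exact ⟨fun h => congrArg (·.hom) h, ObjectProperty.hom_ext _⟩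

lemma epi_heartHom_iff {X Y : σ.SHeart U V} (f : X.obj.as ⟶ Y.obj.as) :
    Epi (heartHom f) ↔ ∀ (T : σ.SHeart U V) (w : Y.obj.as ⟶ T.obj.as),
      f ≫ w ∈ wIdeal (U ∩ V) X.obj.as T.obj.as → w ∈ wIdeal (U ∩ V) Y.obj.as T.obj.as := by
  constructor
  · intro _ T w hw
    rw [← heartHom_eq_zero_iff, ← cancel_epi (heartHom f), comp_zero, ← heartHom_comp,
      heartHom_eq_zero_iff]
    exact hw
  · refine fun h => Preadditive.epi_of_cancel_zero _ fun {T} w hw => ?_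
    obtain ⟨w₀, rfl⟩ := exists_heartHom_eq w
    rw [← heartHom_comp, heartHom_eq_zero_iff] at hw
    exact (heartHom_eq_zero_iff w₀).2 (h T w₀ hw)

lemma projective_of_exists_sub_comp_mem_wIdeal {K : σ.SHeart U V}
    (h : ∀ ⦃Y Z : σ.SHeart U V⦄ (e : Y.obj.as ⟶ Z.obj.as), Epi (heartHom e) →
      ∀ φ : K.obj.as ⟶ Z.obj.as, ∃ ψ, φ - ψ ≫ e ∈ wIdeal (U ∩ V) K.obj.as Z.obj.as) :
    Projective K := by
  constructor
  intro Y Z φ e he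
  obtain ⟨e₀, rfl⟩ := exists_heartHom_eq e
  obtain ⟨φ₀, rfl⟩ := exists_heartHom_eq φ
  obtain ⟨ψ, hψ⟩ := h e₀ he φ₀
  exact ⟨heartHom ψ, by rw [← heartHom_comp, eq_comm, heartHom_eq_iff]; exact hψ⟩

end Heart

end ExtStruct

/-- Corollary 4.13 / `CorHCoH`. If `B` is an extriangulated category with
enough projectives and `(U,V)` is a rigid cotorsion pair (`U ⊆ V`), then the heart of
`(U,V)` has enough projectives: every object admits an epimorphism from a projective
object of the heart. -/
theorem statement_16 {B : Type u} [Category.{v} B] [Preadditive B] [HasFiniteBiproducts B]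
    (σ : ExtStruct B) {U V : Set B} (cp : σ.IsCotorsionPair U V)
    (hrigid : U ⊆ V) (hproj : σ.EnoughProj) :
    ∀ X : σ.SHeart U V, ∃ (P : σ.SHeart U V) (f : P ⟶ X), Projective P ∧ Epi f := by
  intro X
  obtain ⟨W₀, U₀, x₀, y₀, hW₀, hU₀, δ, hδ⟩ := X.property.2
  obtain ⟨P, K, i, p, hP, θ, hθ⟩ := hproj U₀
  obtain ⟨g, rfl⟩ := ExtStruct.exists_push_eq_of_isProj hθ hP δ
  have hPW : P ∈ U ∩ V := ⟨cp.mem_left_of_isProj hP, hrigid (cp.mem_left_of_isProj hP)⟩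
  have hK : K ∈ σ.sHeartSet U V := ⟨cp.mem_sPos hrigid K, P, U₀, i, p, hPW, hU₀, θ, hθ⟩
  refine ⟨σ.sHeartObj U V hK, ExtStruct.heartHom g, ?_, ?_⟩
  · refine ExtStruct.projective_of_exists_sub_comp_mem_wIdeal fun Y Z e he =>
      cp.exists_sub_comp_mem_wIdeal hrigid hθ hP hU₀ Y.property.2 Z.property.2 e ?_
    exact fun T hT => (ExtStruct.epi_heartHom_iff e).1 he (σ.sHeartObj U V hT)
  · exact (ExtStruct.epi_heartHom_iff (X := σ.sHeartObj U V hK) g).2 fun _ _ =>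
      cp.mem_wIdeal_of_comp_mem_wIdeal hU₀ hW₀ hδ

end ExtriHearts
end
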